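/- If d ≥ 4 and (ν₁,…,ν_{d-1}) satisfies Noether's equations, is irreducible in Hudson's sense, and is not de Jonquières, then the dimension 8 + 2∑ νᵢ of the corresponding component of Bir°_d is at most 2d + 12, which is strictly less than 4d + 6 for d ≥ 4. -/

import Mathlib

/-- The multiset of multiplicities associated to a multi-index `ν` in degree `d`:
the multiplicity `i` appears `ν i` times, for `1 ≤ i ≤ d - 1`. -/
def multisetOf (d : ℕ) (ν : ℕ → ℕ) : Multiset ℕ :=
  (Finset.Icc 1 (d - 1)).val.bind fun i => Multiset.replicate (ν i) i

/-- The three largest elements of a multiset of natural numbers. -/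
def topThree (M : Multiset ℕ) : ℕ × ℕ × ℕ :=
  let l := (M.sort (· ≤ ·)).reverse
  (l.headI, l.tail.headI, l.tail.tail.headI)

/-- Hudson's reduction step. -/
def hudsonStep (d : ℕ) (M : Multiset ℕ) : ℕ × Multiset ℕ :=
  match topThree M with
  | (m1, m2, m3) =>
    (2 * d - (m1 + m2 + m3),
      Multiset.filter (fun x => 0 < x)
        ((d - m2 - m3) ::ₘ (d - m1 - m3) ::ₘ (d - m1 - m2) ::ₘ
          ((M.erase m1).erase m2).erase m3))

/-- Hudson's irreducibility test (with fuel). -/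
def hudsonIrredAux : ℕ → ℕ → Multiset ℕ → Prop
  | 0, _, _ => True
  | fuel + 1, d, M =>
    if d ≤ 2 then True
    else
      match topThree M with
      | (m1, m2, _) =>
        m1 + m2 ≤ d ∧ hudsonIrredAux fuel (hudsonStep d M).1 (hudsonStep d M).2

/-- A multi-index `ν` in degree `d` is irreducible in Hudson's sense. -/
def HudsonIrreducible (d : ℕ) (ν : ℕ → ℕ) : Prop :=
  hudsonIrredAux d d (multisetOf d ν)

/-! Sort the `N = ∑ νᵢ` multiplicities as `m₁ ≥ m₂ ≥ m₃ ≥ ⋯`. Each of the `L = N - 2`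
multiplicities `m` other than `m₁, m₂` lies in `[1, m₃]`, so `m² + m₃ ≤ (m₃ + 1) m`. Summing this and
substituting Noether's equations `∑ m = 3(d - 1)`, `∑ m² = d² - 1` bounds `m₃ L`; Hudson's inequality
`m₁ + m₂ ≤ d` together with `m₁ ≤ d - 2` (`m₁ = d - 1` forces the de Jonquières multi-index) makes
that bound smaller than `m₃ (d + 1)`. Hence `L ≤ d`, i.e. `N ≤ d + 2`. -/

def IsDeJonquieres (d : ℕ) (ν : ℕ → ℕ) : Prop :=
  ν 1 = 2 * d - 2 ∧ ν (d - 1) = 1 ∧ ∀ i, 2 ≤ i → i ≤ d - 2 → ν i = 0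

section multisetOf

variable (d : ℕ) (ν : ℕ → ℕ)

lemma card_multisetOf : Multiset.card (multisetOf d ν) = ∑ i ∈ Finset.Icc 1 (d - 1), ν i := by
  rw [Finset.sum_eq_multiset_sum]
  simp [multisetOf, Multiset.card_bind]

lemma sum_multisetOf : (multisetOf d ν).sum = ∑ i ∈ Finset.Icc 1 (d - 1), i * ν i := by
  rw [Finset.sum_eq_multiset_sum]
  simp [multisetOf, Multiset.sum_bind, mul_comm]

lemma sum_map_sq_multisetOf :
    ((multisetOf d ν).map (· ^ 2)).sum = ∑ i ∈ Finset.Icc 1 (d - 1), i ^ 2 * ν i := by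
  rw [Finset.sum_eq_multiset_sum]
  simp [multisetOf, Multiset.map_bind, Multiset.sum_bind, mul_comm]

lemma mem_multisetOf {x : ℕ} (hx : x ∈ multisetOf d ν) : 1 ≤ x ∧ x ≤ d - 1 := by
  obtain ⟨i, hi, hxi⟩ := Multiset.mem_bind.1 hx
  rw [Multiset.eq_of_mem_replicate hxi]
  simpa using hi

lemma count_multisetOf {j : ℕ} (h1 : 1 ≤ j) (h2 : j ≤ d - 1) :
    (multisetOf d ν).count j = ν j := by
  simp only [multisetOf, Multiset.count_bind, Multiset.count_replicate]
  rw [← Finset.sum_eq_multiset_sum, Finset.sum_ite_eq', if_pos (Finset.mem_Icc.2 ⟨h1, h2⟩)]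

lemma isDeJonquieres_of_multisetOf_eq_cons (hd : 3 ≤ d) {s : Multiset ℕ}
    (h : multisetOf d ν = (d - 1) ::ₘ s) (hs : ∀ x ∈ s, x = 1)
    (hsum : (multisetOf d ν).sum = 3 * (d - 1)) : IsDeJonquieres d ν := by
  have hrep := Multiset.eq_replicate_of_mem hs
  have hcard : Multiset.card s = 2 * d - 2 := by
    rw [h, Multiset.sum_cons, hrep, Multiset.sum_replicate, smul_eq_mul, mul_one] at hsum
    rw [hrep, Multiset.card_replicate]
    omega
  have hcount : ∀ j, 1 ≤ j → j ≤ d - 1 →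
      ν j = (if j = d - 1 then 1 else 0) + if j = 1 then 2 * d - 2 else 0 := by
    intro j h1 h2
    rw [← count_multisetOf d ν h1 h2, h, hrep, hcard, Multiset.count_cons,
      Multiset.count_replicate]
    grind
  refine ⟨?_, ?_, fun i hi2 hid => ?_⟩
  · rw [hcount 1 le_rfl (by omega)]; grind
  · rw [hcount (d - 1) (by omega) le_rfl]; grind
  · rw [hcount i (by omega) (by omega)]; grind

lemma add_two_le_of_not_isDeJonquieres (hd : 3 ≤ d) {a b : ℕ} {s : Multiset ℕ}
    (h : multisetOf d ν = a ::ₘ b ::ₘ s) (hab : a + b ≤ d) (hs : ∀ x ∈ s, x ≤ b)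
    (hsum : (multisetOf d ν).sum = 3 * (d - 1)) (hnot : ¬ IsDeJonquieres d ν) : a + 2 ≤ d := by
  by_contra ha
  have had : a = d - 1 := by have := (mem_multisetOf d ν (x := a) (by simp [h])).2; omega
  refine hnot (isDeJonquieres_of_multisetOf_eq_cons d ν hd (s := b ::ₘ s) (by rw [h, had])
    (fun x hx => ?_) hsum)
  have := (mem_multisetOf d ν (x := x) (by rw [h]; exact Multiset.mem_cons_of_mem hx)).1
  grind

end multisetOf

lemma exists_eq_cons_topThree (M : Multiset ℕ) (h : 3 ≤ Multiset.card M) :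
    ∃ a b c t, M = a ::ₘ b ::ₘ c ::ₘ t ∧ topThree M = (a, b, c) ∧
      c ≤ b ∧ b ≤ a ∧ ∀ x ∈ t, x ≤ c := by
  have hlen : ((M.sort (· ≤ ·)).reverse).length = Multiset.card M := by simp
  obtain ⟨a, b, c, t, hl⟩ : ∃ a b c t, (M.sort (· ≤ ·)).reverse = a :: b :: c :: t := by
    rcases hE : (M.sort (· ≤ ·)).reverse with _ | ⟨a, _ | ⟨b, _ | ⟨c, t⟩⟩⟩ <;>
      simp only [hE, List.length_nil, List.length_cons] at hlen
    all_goals first | omega | exact ⟨a, b, c, t, rfl⟩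
  have hsorted : (a :: b :: c :: t).Pairwise (· ≥ ·) := by
    rw [← hl]
    exact List.pairwise_reverse.2 (M.pairwise_sort (· ≤ ·))
  simp only [List.pairwise_cons, List.mem_cons] at hsorted
  refine ⟨a, b, c, t, ?_, ?_, hsorted.2.1 c (by simp), hsorted.1 b (by simp), hsorted.2.2.1⟩
  · rw [← Multiset.sort_eq M (· ≤ ·), ← Multiset.coe_reverse, hl]; rfl
  · simp only [topThree, hl]; rfl

lemma HudsonIrreducible.topThree_fst_add_snd_le {d : ℕ} {ν : ℕ → ℕ} (h : HudsonIrreducible d ν)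
    (hd : 3 ≤ d) :
    (topThree (multisetOf d ν)).1 + (topThree (multisetOf d ν)).2.1 ≤ d := by
  obtain ⟨k, rfl⟩ : ∃ k, d = k + 1 := ⟨d - 1, by omega⟩
  rw [HudsonIrreducible, hudsonIrredAux, if_neg (by omega)] at h
  exact h.1

lemma sum_map_sq_add_le {c : ℕ} {s : Multiset ℕ} (hs : ∀ x ∈ s, 1 ≤ x ∧ x ≤ c) :
    (s.map (· ^ 2)).sum + c * Multiset.card s ≤ (c + 1) * s.sum := by
  calc (s.map (· ^ 2)).sum + c * Multiset.card s = (s.map fun x => x ^ 2 + c).sum := by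
        simp [Multiset.sum_map_add, mul_comm]
    _ ≤ (s.map fun x => (c + 1) * x).sum := Multiset.sum_map_le_sum_map _ _ fun x hx => by
        obtain ⟨h1, h2⟩ := hs x hx
        nlinarith
    _ = (c + 1) * s.sum := by rw [Multiset.sum_map_mul_left, Multiset.map_id']

lemma card_le_of_noether {a b c d : ℕ} {s : Multiset ℕ} (hc : 1 ≤ c) (hcb : c ≤ b) (hba : b ≤ a)
    (hs : ∀ x ∈ s, 1 ≤ x ∧ x ≤ c) (hab : a + b ≤ d) (ha : a + 2 ≤ d)
    (hsum : a + b + s.sum + 3 = 3 * d) (hsq : a ^ 2 + b ^ 2 + (s.map (· ^ 2)).sum + 1 = d ^ 2) :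
    Multiset.card s ≤ d := by
  have hbound := sum_map_sq_add_le hs
  suffices c * Multiset.card s < c * (d + 1) from Nat.lt_succ_iff.1 (Nat.lt_of_mul_lt_mul_left this)
  zify at hc hcb hba hab ha hsum hsq hbound ⊢
  have hp : (0 : ℤ) ≤ d - a - b := by linarith
  have hs : (0 : ℤ) ≤ b - c := by linarith
  have hu : (0 : ℤ) ≤ c - 1 := by linarith
  have hv : (0 : ℤ) ≤ a - b := by linarith
  have hw : (0 : ℤ) ≤ d - a - 2 := by linarith
  nlinarith [mul_nonneg hw hp, mul_nonneg hw hs, mul_nonneg hw hv,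
    mul_nonneg hp hs, mul_nonneg hp hu, mul_nonneg hp hv, mul_nonneg hs hv]

theorem stmt_18 (d : ℕ) (hd : 4 ≤ d) (ν : ℕ → ℕ)
    (h1 : ∑ i ∈ Finset.Icc 1 (d - 1), i ^ 2 * ν i = d ^ 2 - 1)
    (h2 : ∑ i ∈ Finset.Icc 1 (d - 1), i * ν i = 3 * (d - 1))
    (hirr : HudsonIrreducible d ν)
    (hnotdJ : ¬ (ν 1 = 2 * d - 2 ∧ ν (d - 1) = 1 ∧ ∀ i, 2 ≤ i → i ≤ d - 2 → ν i = 0)) :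
    8 + 2 * ∑ i ∈ Finset.Icc 1 (d - 1), ν i ≤ 2 * d + 12 ∧ 2 * d + 12 < 4 * d + 6 := by
  refine ⟨?_, by omega⟩
  suffices Multiset.card (multisetOf d ν) ≤ d + 2 by rw [card_multisetOf] at this; omega
  rcases lt_or_ge (Multiset.card (multisetOf d ν)) 3 with h3 | h3
  · omega
  obtain ⟨a, b, c, t, hM, htop, hcb, hba, htc⟩ := exists_eq_cons_topThree _ h3
  have hab : a + b ≤ d := by simpa [htop] using hirr.topThree_fst_add_snd_le (by omega)
  rw [← sum_multisetOf] at h2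
  rw [← sum_map_sq_multisetOf] at h1
  have ha : a + 2 ≤ d := add_two_le_of_not_isDeJonquieres d ν (by omega) hM hab
    (fun x hx => by grind) h2 hnotdJ
  have htail : ∀ x ∈ c ::ₘ t, 1 ≤ x ∧ x ≤ c := fun x hx => by
    have := (mem_multisetOf d ν (x := x) (by simp [hM, hx])).1
    grind
  have hd2 : 1 ≤ d ^ 2 := Nat.one_le_pow 2 d (by omega)
  rw [hM] at h1 h2
  simp only [Multiset.sum_cons, Multiset.map_cons] at h1 h2
  have hL := card_le_of_noether (s := c ::ₘ t) (htail c (by simp)).1 hcb hba htail hab ha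
    (by rw [Multiset.sum_cons]; omega) (by rw [Multiset.map_cons, Multiset.sum_cons]; omega)
  rw [hM, Multiset.card_cons, Multiset.card_cons]
  omega
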